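/- arXiv:2205.13336 — 3 statements merged into one kernel-verified Lean document; each statement's English description precedes it below -/
import Mathlib

section
/- If I is a small filtered category, then there exists a cofinite directed poset J together with a cofinal functor J → I. -/
/-!
Deligne's theorem (`IsFiltered.exists_directed`) gives a final functor to `I` from a directed
poset `α`. The finite subsets of `α` having a greatest element, ordered by inclusion, form a
cofinite directed poset: the union of two of them together with an upper bound of their greatest
elements has a greatest element. Taking the greatest element is a monotone surjection onto `α`,
and composing it with the final functor gives the cofinal functor.
-/

open CategoryTheory

universe u

abbrev FinsetWithGreatest (α : Type*) [Preorder α] : Type _ :=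
  {s : Finset α // ∃ a, IsGreatest (s : Set α) a}

namespace FinsetWithGreatest

variable {α : Type*} [Preorder α]

noncomputable def greatest (s : FinsetWithGreatest α) : α := s.2.choose

lemma isGreatest_greatest (s : FinsetWithGreatest α) : IsGreatest (s.1 : Set α) s.greatest :=
  s.2.choose_spec

lemma greatest_mono : Monotone (greatest : FinsetWithGreatest α → α) := fun s t hst =>
  s.isGreatest_greatest.mono t.isGreatest_greatest (Finset.coe_subset.2 hst)

def singleton (a : α) : FinsetWithGreatest α :=
  ⟨{a}, a, by simp⟩

lemma greatest_surjective : Function.Surjective (greatest : FinsetWithGreatest α → α) :=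
  fun a => ⟨singleton a, Finset.mem_singleton.1 (singleton a).isGreatest_greatest.1⟩

instance [IsDirected α (· ≤ ·)] : IsDirected (FinsetWithGreatest α) (· ≤ ·) where
  directed s t := by
    classical
    obtain ⟨c, hsc, htc⟩ := directed_of (· ≤ ·) s.greatest t.greatest
    have hc : IsGreatest (insert c (s.1 ∪ t.1) : Finset α) c := by
      refine ⟨by simp, fun x hx => ?_⟩
      simp only [Finset.coe_insert, Finset.coe_union, Set.mem_insert_iff, Set.mem_union,
        Finset.mem_coe] at hx
      rcases hx with rfl | hxs | hxt
      · exact le_rfl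
      · exact (s.isGreatest_greatest.2 hxs).trans hsc
      · exact (t.isGreatest_greatest.2 hxt).trans htc
    exact ⟨⟨_, c, hc⟩, fun x hx => by simp [hx], fun x hx => by simp [hx]⟩

end FinsetWithGreatest

/-- For every small filtered category `I` there exist a cofinite directed
partial order `J` (directed: any two elements have an upper bound; cofinite: every element
has only finitely many elements below it) and a cofinal functor `u : J ⥤ I` (i.e. for every
`i : I` there are `j : J` and a morphism `i ⟶ u.obj j`). -/
theorem exists_cofinite_directed_cofinal (I : Type u) [SmallCategory I] [IsFiltered I] :
    ∃ (J : Type u) (_ : PartialOrder J),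
      IsDirected J (· ≤ ·) ∧
      (∀ j : J, {k : J | k ≤ j}.Finite) ∧
      ∃ u : J ⥤ I, ∀ i : I, ∃ j : J, Nonempty (i ⟶ u.obj j) := by
  classical
  obtain ⟨α, _, _, -, F, _⟩ := IsFiltered.exists_directed I
  refine ⟨FinsetWithGreatest α, inferInstance, inferInstance, Set.finite_Iic,
    FinsetWithGreatest.greatest_mono.functor ⋙ F, fun i => ?_⟩
  obtain ⟨⟨_, a, f⟩⟩ : Nonempty (StructuredArrow i F) := inferInstance
  obtain ⟨j, rfl⟩ := FinsetWithGreatest.greatest_surjective a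
  exact ⟨j, ⟨f⟩⟩
end

section
/- A level morphism f : X → Y of inverse systems over a common small filtered index category I is an isomorphism in Pro(C) if and only if for every i ∈ I there exist j ∈ I, a morphism φ : i → j, and a morphism u : Y_j → X_i in C such that f_i ∘ u = Y_φ and u ∘ f_j = X_φ. -/
/-! The pro-completion `Pro(C)`, modelled via the full embedding
`Pro(C) ⊆ (C ⥤ Type)ᵒᵖ`, `X = (X_i)_i ↦ colim_i C(X_i, -)`.  A morphism of
pro-objects `X → Y` is a natural transformation `proFun Y ⟶ proFun X`, and
`Pro(C)(X,Y) = lim_j colim_i C(X_i, Y_j) ≅ Hom(proFun Y, proFun X)`. -/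

open CategoryTheory Limits Opposite

universe v u

variable {C : Type u} [Category.{v} C]

/-- The filtered diagram of corepresentables associated to an inverse system. -/
@[simp] def proDiag {I : Type v} [SmallCategory I] (X : Iᵒᵖ ⥤ C) : I ⥤ (C ⥤ Type v) :=
  X.rightOp ⋙ coyoneda

/-- The functor `colim_i C(X_i, -)` corepresenting the pro-object `lim_i X_i`. -/
noncomputable def proFun {I : Type v} [SmallCategory I] (X : Iᵒᵖ ⥤ C) : C ⥤ Type v :=
  colimit (proDiag X)

/-- The morphism of pro-objects `X → Y` induced by a level morphism (natural
transformation) `f : X ⟶ Y`; in the corepresenting direction it goes `proFun Y ⟶ proFun X`. -/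
noncomputable def levelHom {I : Type v} [SmallCategory I] {X Y : Iᵒᵖ ⥤ C} (f : X ⟶ Y) :
    proFun Y ⟶ proFun X :=
  colimMap (Functor.whiskerRight (NatTrans.rightOp f) coyoneda)

/-- A bundled inverse system (an object of `Pro(C)`). -/
structure Sys (C : Type u) [Category.{v} C] where
  I : Type v
  [cat : SmallCategory I]
  [filt : IsFiltered I]
  F : Iᵒᵖ ⥤ C

attribute [instance] Sys.cat Sys.filt

/-- The corepresenting functor of a bundled inverse system. -/
noncomputable def Sys.pro (X : Sys C) : C ⥤ Type v := proFun X.F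


/-- Joint surjectivity for colimits in a functor category to `Type`, evaluated at an object. -/
lemma obj_jointly_surjective {I : Type v} [SmallCategory I] (F : I ⥤ (C ⥤ Type v)) (c : C)
    (x : (colimit F).obj c) : ∃ (i : I) (y : (F.obj i).obj c), (colimit.ι F i).app c y = x := by
  obtain ⟨i, y, h⟩ := Types.jointly_surjective'
    ((colimitObjIsoColimitCompEvaluation F c).hom x)
  refine ⟨i, y, ?_⟩
  have := congrArg (colimitObjIsoColimitCompEvaluation F c).inv h
  rwa [← types_comp_apply (colimit.ι (F ⋙ (evaluation C (Type v)).obj c) i)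
      (colimitObjIsoColimitCompEvaluation F c).inv,
    colimitObjIsoColimitCompEvaluation_ι_inv, ← types_comp_apply
      ((colimitObjIsoColimitCompEvaluation F c).hom)
      ((colimitObjIsoColimitCompEvaluation F c).inv), Iso.hom_inv_id, types_id_apply] at this

/-- Equality criterion for filtered colimits in a functor category to `Type`,
evaluated at an object. -/
lemma obj_colimit_eq_iff {I : Type v} [SmallCategory I] [IsFiltered I]
    (F : I ⥤ (C ⥤ Type v)) (c : C) {i j : I} {x : (F.obj i).obj c} {y : (F.obj j).obj c} :
    (colimit.ι F i).app c x = (colimit.ι F j).app c y ↔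
      ∃ (k : I) (a : i ⟶ k) (b : j ⟶ k), (F.map a).app c x = (F.map b).app c y := by
  rw [← colimitObjIsoColimitCompEvaluation_ι_inv F i c,
    ← colimitObjIsoColimitCompEvaluation_ι_inv F j c, types_comp_apply, types_comp_apply]
  constructor
  · intro h
    have := (colimitObjIsoColimitCompEvaluation F c).symm.toEquiv.injective h
    rw [Types.FilteredColimit.colimit_eq_iff] at this
    exact this
  · intro h
    apply congrArg
    rw [Types.FilteredColimit.colimit_eq_iff]
    exact h

section Backward

variable {I : Type v} [SmallCategory I] [IsFiltered I] {X Y : Iᵒᵖ ⥤ C} (f : X ⟶ Y)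
variable (j : I → I) (φ : ∀ i, i ⟶ j i) (u : ∀ i, Y.obj (op (j i)) ⟶ X.obj (op i))

/-- Key compatibility: the would-be inverse components form a cocone. -/
lemma key_compat
    (hu : ∀ i, u i ≫ f.app (op i) = Y.map (φ i).op)
    (hf : ∀ i, f.app (op (j i)) ≫ u i = X.map (φ i).op)
    {i i' : I} (α : i ⟶ i') :
    coyoneda.map (u i' ≫ X.map α.op).op ≫ colimit.ι (proDiag Y) (j i') =
      coyoneda.map (u i).op ≫ colimit.ι (proDiag Y) (j i) := by
  obtain ⟨K, w, w', hcomm⟩ : ∃ (K : I) (w : j i ⟶ K) (w' : j i' ⟶ K),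
      φ i ≫ w = α ≫ φ i' ≫ w' := by
    refine ⟨IsFiltered.coeq (φ i ≫ IsFiltered.leftToMax (j i) (j i'))
        (α ≫ φ i' ≫ IsFiltered.rightToMax (j i) (j i')),
      IsFiltered.leftToMax _ _ ≫ IsFiltered.coeqHom _ _,
      IsFiltered.rightToMax _ _ ≫ IsFiltered.coeqHom _ _, ?_⟩
    simpa [Category.assoc] using
      IsFiltered.coeq_condition (φ i ≫ IsFiltered.leftToMax (j i) (j i'))
        (α ≫ φ i' ≫ IsFiltered.rightToMax (j i) (j i'))
  have h1a : f.app (op K) ≫ Y.map w.op ≫ u i = X.map (φ i ≫ w).op := by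
    rw [← NatTrans.naturality_assoc, hf i, ← X.map_comp, ← op_comp]
  have h1b : f.app (op K) ≫ Y.map w'.op ≫ (u i' ≫ X.map α.op) =
      X.map (α ≫ φ i' ≫ w').op := by
    rw [← NatTrans.naturality_assoc,
      show f.app (op (j i')) ≫ u i' ≫ X.map α.op = X.map (φ i').op ≫ X.map α.op from by
        rw [← Category.assoc, hf i']]
    simp only [← Functor.map_comp, ← op_comp, Category.assoc]
  have main : Y.map (w ≫ φ K).op ≫ u i =
      Y.map (w' ≫ φ K).op ≫ (u i' ≫ X.map α.op) := by
    calc Y.map (w ≫ φ K).op ≫ u i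
        = u K ≫ f.app (op K) ≫ Y.map w.op ≫ u i := by
          rw [op_comp, Y.map_comp, ← hu K, Category.assoc, Category.assoc]
      _ = u K ≫ X.map (φ i ≫ w).op := by rw [h1a]
      _ = u K ≫ f.app (op K) ≫ Y.map w'.op ≫ (u i' ≫ X.map α.op) := by
          rw [hcomm, h1b]
      _ = Y.map (w' ≫ φ K).op ≫ (u i' ≫ X.map α.op) := by
          rw [op_comp, Y.map_comp, ← hu K, Category.assoc, Category.assoc]
  have w1 : colimit.ι (proDiag Y) (j i) =
      coyoneda.map ((Y.map (w ≫ φ K).op).op) ≫ colimit.ι (proDiag Y) (j K) :=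
    (colimit.w (proDiag Y) (w ≫ φ K)).symm
  have w2 : colimit.ι (proDiag Y) (j i') =
      coyoneda.map ((Y.map (w' ≫ φ K).op).op) ≫ colimit.ι (proDiag Y) (j K) :=
    (colimit.w (proDiag Y) (w' ≫ φ K)).symm
  simp only [proDiag] at w1 w2 ⊢
  rw [w1, w2, ← Category.assoc, ← Category.assoc, ← Functor.map_comp, ← Functor.map_comp,
    ← op_comp, ← op_comp, main]

/-- The cocone defining the inverse of `levelHom f`. -/
noncomputable def invCocone
    (hu : ∀ i, u i ≫ f.app (op i) = Y.map (φ i).op)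
    (hf : ∀ i, f.app (op (j i)) ≫ u i = X.map (φ i).op) : Cocone (proDiag X) where
  pt := proFun Y
  ι :=
    { app := fun i => coyoneda.map (u i).op ≫ colimit.ι (proDiag Y) (j i)
      naturality := fun i i' α => by
        simp only [proDiag, Functor.comp_map, Functor.rightOp_map, Functor.const_obj_map,
          Category.comp_id, ← Category.assoc, ← Functor.map_comp, ← op_comp]
        have := key_compat f j φ u hu hf α
        simp only [proDiag, Functor.map_comp, op_comp, Category.assoc, Category.comp_id] at this ⊢
        exact this }

/-- Backward implication: a level retraction system makes `levelHom f` an isomorphism. -/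
lemma isIso_levelHom_of_retraction
    (hu : ∀ i, u i ≫ f.app (op i) = Y.map (φ i).op)
    (hf : ∀ i, f.app (op (j i)) ≫ u i = X.map (φ i).op) : IsIso (levelHom f) := by
  refine ⟨⟨colimit.desc (proDiag X) (invCocone f j φ u hu hf), ?_, ?_⟩⟩
  · apply colimit.hom_ext
    intro i
    have e1 : colimit.ι (proDiag Y) i ≫ levelHom f =
        coyoneda.map (f.app (op i)).op ≫ colimit.ι (proDiag X) i := ι_colimMap _ _
    have e2 : colimit.ι (proDiag X) i ≫ colimit.desc (proDiag X) (invCocone f j φ u hu hf) =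
        coyoneda.map (u i).op ≫ colimit.ι (proDiag Y) (j i) := colimit.ι_desc _ _
    have e3 : coyoneda.map (f.app (op i)).op ≫ coyoneda.map (u i).op =
        coyoneda.map (Y.map (φ i).op).op := by
      rw [← Functor.map_comp, ← op_comp, hu i]
    have a1 := (Category.assoc (colimit.ι (proDiag Y) i) (levelHom f)
      (colimit.desc (proDiag X) (invCocone f j φ u hu hf))).symm
    have a2 := congrArg (· ≫ colimit.desc (proDiag X) (invCocone f j φ u hu hf)) e1
    have a3 := Category.assoc (coyoneda.map (f.app (op i)).op) (colimit.ι (proDiag X) i)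
      (colimit.desc (proDiag X) (invCocone f j φ u hu hf))
    have a4 := congrArg (coyoneda.map (f.app (op i)).op ≫ ·) e2
    have a5 := (Category.assoc (coyoneda.map (f.app (op i)).op) (coyoneda.map (u i).op)
      (colimit.ι (proDiag Y) (j i))).symm
    have a6 := congrArg (· ≫ colimit.ι (proDiag Y) (j i)) e3
    exact a1.trans (a2.trans (a3.trans (a4.trans (a5.trans (a6.trans
      ((colimit.w (proDiag Y) (φ i)).trans (Category.comp_id (colimit.ι (proDiag Y) i)).symm))))))
  · apply colimit.hom_ext
    intro i
    have e1 : colimit.ι (proDiag Y) (j i) ≫ levelHom f =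
        coyoneda.map (f.app (op (j i))).op ≫ colimit.ι (proDiag X) (j i) := ι_colimMap _ _
    have e2 : colimit.ι (proDiag X) i ≫ colimit.desc (proDiag X) (invCocone f j φ u hu hf) =
        coyoneda.map (u i).op ≫ colimit.ι (proDiag Y) (j i) := colimit.ι_desc _ _
    have e3 : coyoneda.map (u i).op ≫ coyoneda.map (f.app (op (j i))).op =
        coyoneda.map (X.map (φ i).op).op := by
      rw [← Functor.map_comp, ← op_comp, hf i]
    have a1 := (Category.assoc (colimit.ι (proDiag X) i)
      (colimit.desc (proDiag X) (invCocone f j φ u hu hf)) (levelHom f)).symm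
    have a2 := congrArg (· ≫ levelHom f) e2
    have a3 := Category.assoc (coyoneda.map (u i).op) (colimit.ι (proDiag Y) (j i)) (levelHom f)
    have a4 := congrArg (coyoneda.map (u i).op ≫ ·) e1
    have a5 := (Category.assoc (coyoneda.map (u i).op) (coyoneda.map (f.app (op (j i))).op)
      (colimit.ι (proDiag X) (j i))).symm
    have a6 := congrArg (· ≫ colimit.ι (proDiag X) (j i)) e3
    exact a1.trans (a2.trans (a3.trans (a4.trans (a5.trans (a6.trans
      ((colimit.w (proDiag X) (φ i)).trans (Category.comp_id (colimit.ι (proDiag X) i)).symm))))))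

end Backward


/-- A level morphism `f : X ⟶ Y` of inverse systems over a common small
filtered index category `I` is an isomorphism in `Pro(C)` if and only if for every `i : I`
there are `j : I`, `φ : i ⟶ j` and `u : Y_j ⟶ X_i` with `u ≫ f_i = Y_φ` and
`f_j ≫ u = X_φ`. -/
theorem level_isIso_iff {C : Type u} [Category.{v} C]
    {I : Type v} [SmallCategory I] [IsFiltered I]
    {X Y : Iᵒᵖ ⥤ C} (f : X ⟶ Y) :
    IsIso (levelHom f) ↔
      ∀ i : I, ∃ (j : I) (φ : i ⟶ j) (u : Y.obj (op j) ⟶ X.obj (op i)),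
        u ≫ f.app (op i) = Y.map φ.op ∧ f.app (op j) ≫ u = X.map φ.op := by
  constructor
  · intro hiso i
    set g := inv (levelHom f) with hg
    have hid1 : ∀ (c : C) (x : (proFun X).obj c), (levelHom f).app c (g.app c x) = x := by
      intro c x
      rw [hg, ← types_comp_apply ((inv (levelHom f)).app c) ((levelHom f).app c),
        ← NatTrans.comp_app, IsIso.inv_hom_id, NatTrans.id_app, types_id_apply]
    have hid2 : ∀ (c : C) (x : (proFun Y).obj c), g.app c ((levelHom f).app c x) = x := by
      intro c x
      rw [hg, ← types_comp_apply ((levelHom f).app c) ((inv (levelHom f)).app c),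
        ← NatTrans.comp_app, IsIso.hom_inv_id, NatTrans.id_app, types_id_apply]
    have hlev : ∀ (k : I) (c : C) (h : Y.obj (op k) ⟶ c),
        (levelHom f).app c ((colimit.ι (proDiag Y) k).app c h)
          = (colimit.ι (proDiag X) k).app c (f.app (op k) ≫ h) := by
      intro k c h
      erw [← types_comp_apply ((colimit.ι (proDiag Y) k).app c) ((levelHom f).app c),
        ← NatTrans.comp_app, levelHom, ι_colimMap, NatTrans.comp_app, types_comp_apply]
    obtain ⟨j₀, (u₀ : Y.obj (op j₀) ⟶ X.obj (op i)), hu₀⟩ := obj_jointly_surjective (proDiag Y) (X.obj (op i))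
      (g.app (X.obj (op i)) ((colimit.ι (proDiag X) i).app (X.obj (op i)) (𝟙 (X.obj (op i)))))
    have e1 : (colimit.ι (proDiag X) j₀).app (X.obj (op i)) (f.app (op j₀) ≫ u₀)
        = (colimit.ι (proDiag X) i).app (X.obj (op i)) (𝟙 (X.obj (op i))) := by
      erw [← hlev j₀ _ u₀, hu₀, hid1]
    erw [obj_colimit_eq_iff] at e1
    obtain ⟨k, b, a, hab⟩ := e1
    simp only [proDiag, Functor.comp_map, Functor.rightOp_map, Functor.flip_map_app, yoneda_obj_map,
      Quiver.Hom.unop_op, Category.comp_id, Functor.flip_obj_map, yoneda_map_app, TypeCat.ofHom_apply] at hab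
    replace hab : X.map b.op ≫ f.app (op j₀) ≫ u₀ = X.map a.op :=
      hab.trans (Category.comp_id _)
    have e2 : (colimit.ι (proDiag Y) j₀).app (Y.obj (op i)) (u₀ ≫ f.app (op i))
        = (colimit.ι (proDiag Y) i).app (Y.obj (op i)) (𝟙 (Y.obj (op i))) := by
      have hA := NatTrans.naturality_apply (colimit.ι (proDiag Y) j₀) (f.app (op i)) u₀
      have hC := NatTrans.naturality_apply g (f.app (op i))
        ((colimit.ι (proDiag X) i).app (X.obj (op i)) (𝟙 (X.obj (op i))))
      have hD := NatTrans.naturality_apply (colimit.ι (proDiag X) i) (f.app (op i))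
        (𝟙 (X.obj (op i)))
      exact hA.trans ((congrArg ((colimit (proDiag Y)).map (f.app (op i))) hu₀).trans
        (hC.symm.trans ((congrArg (g.app (Y.obj (op i))) (hD.symm.trans
          ((congrArg ((colimit.ι (proDiag X) i).app (Y.obj (op i)))
            (Category.id_comp (f.app (op i)))).trans
          ((hlev i _ (𝟙 _)).trans (congrArg _ (Category.comp_id _))).symm))).trans (hid2 _ _))))
    erw [obj_colimit_eq_iff] at e2
    obtain ⟨k', b', a', hab'⟩ := e2
    simp only [proDiag, Functor.comp_map, Functor.rightOp_map, Functor.flip_map_app, yoneda_obj_map,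
      Quiver.Hom.unop_op, Category.comp_id, Functor.flip_obj_map, yoneda_map_app, TypeCat.ofHom_apply] at hab'
    replace hab' : Y.map b'.op ≫ u₀ ≫ f.app (op i) = Y.map a'.op :=
      hab'.trans (Category.comp_id _)
    obtain ⟨m, c1, c2, hm⟩ : ∃ (m : I) (c1 : k ⟶ m) (c2 : k' ⟶ m), b ≫ c1 = b' ≫ c2 := by
      refine ⟨IsFiltered.coeq (b ≫ IsFiltered.leftToMax k k')
          (b' ≫ IsFiltered.rightToMax k k'),
        IsFiltered.leftToMax k k' ≫ IsFiltered.coeqHom _ _,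
        IsFiltered.rightToMax k k' ≫ IsFiltered.coeqHom _ _, ?_⟩
      simpa [Category.assoc] using IsFiltered.coeq_condition
        (b ≫ IsFiltered.leftToMax k k') (b' ≫ IsFiltered.rightToMax k k')
    have he₂ := IsFiltered.coeq_condition (a ≫ c1) (a' ≫ c2)
    refine ⟨IsFiltered.coeq (a ≫ c1) (a' ≫ c2),
      (a ≫ c1) ≫ IsFiltered.coeqHom (a ≫ c1) (a' ≫ c2),
      Y.map ((b ≫ c1) ≫ IsFiltered.coeqHom (a ≫ c1) (a' ≫ c2)).op ≫ u₀, ?_, ?_⟩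
    · have hw : (b ≫ c1) ≫ IsFiltered.coeqHom (a ≫ c1) (a' ≫ c2)
          = b' ≫ (c2 ≫ IsFiltered.coeqHom (a ≫ c1) (a' ≫ c2)) := by
        rw [hm, Category.assoc]
      have he₂' : a ≫ c1 ≫ IsFiltered.coeqHom (a ≫ c1) (a' ≫ c2)
          = a' ≫ c2 ≫ IsFiltered.coeqHom (a ≫ c1) (a' ≫ c2) := by
        simpa [Category.assoc] using he₂
      rw [Category.assoc, hw, op_comp, Y.map_comp, Category.assoc, hab',
        ← Y.map_comp, ← op_comp, he₂, Category.assoc]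
    · rw [← NatTrans.naturality_assoc,
        show (b ≫ c1) ≫ IsFiltered.coeqHom (a ≫ c1) (a' ≫ c2)
            = b ≫ (c1 ≫ IsFiltered.coeqHom (a ≫ c1) (a' ≫ c2)) from Category.assoc _ _ _,
        op_comp, X.map_comp, Category.assoc, hab, ← X.map_comp, ← op_comp, Category.assoc]
  · intro h
    choose j φ u hu hf using h
    exact isIso_levelHom_of_retraction f j φ u hu hf
end

section
/- Let f : X → Y be a level morphism of inverse systems in a category C such that every component f_i is a monomorphism in C. Then f is a monomorphism in Pro(C). -/
/-! The pro-completion `Pro(C)`, modelled via the full embedding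
`Pro(C) ⊆ (C ⥤ Type)ᵒᵖ`, `X = (X_i)_i ↦ colim_i C(X_i, -)`.  A morphism of
pro-objects `X → Y` is a natural transformation `proFun Y ⟶ proFun X`, and
`Pro(C)(X,Y) = lim_j colim_i C(X_i, Y_j) ≅ Hom(proFun Y, proFun X)`. -/

open CategoryTheory Limits Opposite

universe v u

variable {C : Type u} [Category.{v} C]

/-- A pro-object's corepresenting functor sends monomorphisms to injective maps,
since it is a filtered colimit of corepresentables and filtered colimits in `Type`
preserve finite limits (hence monomorphisms). -/
lemma proFun_map_injective {J : Type v} [SmallCategory J] [IsFiltered J]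
    (W : Jᵒᵖ ⥤ C) {A B : C} (g : A ⟶ B) [Mono g] :
    Function.Injective ((proFun W).map g) := by
  rw [← CategoryTheory.mono_iff_injective]
  let η : proDiag W ⋙ (evaluation C (Type v)).obj A ⟶
      proDiag W ⋙ (evaluation C (Type v)).obj B :=
    Functor.whiskerLeft (proDiag W) ((evaluation C (Type v)).map g)
  have hη : ∀ j : J, Mono (η.app j) := by
    intro j
    rw [CategoryTheory.mono_iff_injective]
    intro u v huv
    have : u ≫ g = v ≫ g := huv
    exact (cancel_mono g).mp this
  haveI : Mono η := NatTrans.mono_of_mono_app η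
  haveI : Mono (colimMap η) := by
    have : colimMap η = colim.map η := rfl
    rw [this]
    infer_instance
  have key := colimitObjIsoColimitCompEvaluation_inv_colimit_map (proDiag W) g
  have : (proFun W).map g =
      (colimitObjIsoColimitCompEvaluation (proDiag W) A).hom ≫ colimMap η ≫
        (colimitObjIsoColimitCompEvaluation (proDiag W) B).inv := by
    rw [← key, Iso.hom_inv_id_assoc]
    rfl
  rw [this]
  exact @mono_comp _ _ _ _ _ _ (@IsIso.mono_of_iso _ _ _ _ _ (Iso.isIso_hom _)) _
    (@mono_comp _ _ _ _ _ _ inferInstance _ (@IsIso.mono_of_iso _ _ _ _ _ (Iso.isIso_inv _)))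

/-- A level morphism of inverse systems whose components are all
monomorphisms in `C` is a monomorphism in `Pro(C)`: for any pro-object `W` and any pair of
pro-morphisms `a, b : W → X` (corepresented as `a, b : proFun X ⟶ W.pro`) with
`f ∘ a = f ∘ b` one has `a = b`. -/
theorem level_mono_is_pro_mono {C : Type u} [Category.{v} C]
    {I : Type v} [SmallCategory I] [IsFiltered I]
    {X Y : Iᵒᵖ ⥤ C} (f : X ⟶ Y) (hf : ∀ i : Iᵒᵖ, Mono (f.app i)) :
    ∀ (W : Sys C) (a b : proFun X ⟶ W.pro),
      levelHom f ≫ a = levelHom f ≫ b → a = b := by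
  intro W a b h
  apply colimit.hom_ext
  intro i
  have h' : colimit.ι (proDiag Y) i ≫ levelHom f ≫ a =
      colimit.ι (proDiag Y) i ≫ levelHom f ≫ b := by exact congrArg (fun t => colimit.ι (proDiag Y) i ≫ t) h
  unfold levelHom at h'
  erw [← Category.assoc, ← Category.assoc, ι_colimMap] at h'
  have happ : (Functor.whiskerRight (NatTrans.rightOp f) coyoneda).app i =
      coyoneda.map ((f.app (op i)).op) := rfl
  erw [happ, Category.assoc, Category.assoc] at h'
  -- reinterpret via the coyoneda equivalence
  have ha := congrArg coyonedaEquiv h'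
  erw [← coyonedaEquiv_naturality (colimit.ι (proDiag X) i ≫ a) (f.app (op i)),
      ← coyonedaEquiv_naturality (colimit.ι (proDiag X) i ≫ b) (f.app (op i))] at ha
  haveI := hf (op i)
  have := proFun_map_injective W.F (f.app (op i)) ha
  exact coyonedaEquiv.injective this
end
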